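/- Consider a FIFO queue with constant service rate 1/τ (i.e., one job is completed every τ time units) where jobs arrive at times t₁ ≤ t₂ ≤ ⋯. Suppose queue Q_U receives the same jobs as queue Q_L but each job's arrival is delayed by Δ ≥ 0 (job i arrives at t_i + Δ in Q_U instead of t_i in Q_L). Then the position of the m-th job in Q_U at time t + Δ is at most its position in Q_L at time t, for all t ≥ t_m: that is, Q_U^{(m)}(t+Δ) ≤ Q_L^{(m)}(t). -/

import Mathlib

open scoped Classical

/-- Departure time of the n-th job in a FIFO queue with deterministic service
time τ per job and arrival times `a`. -/
noncomputable def departure (τ : ℝ) (a : ℕ → ℝ) : ℕ → ℝ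
  | 0 => a 0 + τ
  | n + 1 => max (a (n + 1)) (departure τ a n) + τ

/-- Position of job m at time t: the number of jobs among the first m+1 that are
still in the queue (at or ahead of job m), which is 0 once job m has been served. -/
noncomputable def queuePos (τ : ℝ) (a : ℕ → ℝ) (m : ℕ) (t : ℝ) : ℕ :=
  ((Finset.range (m + 1)).filter fun i => t < departure τ a i).card

/-! A uniform delay is a time translation: the FIFO recursion commutes with adding a constant
to every arrival, so every departure is delayed by exactly Δ and the delayed queue at time
t + Δ is the original queue at time t. The inequality holds with equality. -/

theorem departure_add_const (τ : ℝ) (a : ℕ → ℝ) (c : ℝ) (n : ℕ) :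
    departure τ (fun i => a i + c) n = departure τ a n + c := by
  induction n with
  | zero => simp only [departure]; ring
  | succ n ih => simp only [departure, ih, max_add_add_right]; ring

theorem queuePos_add_const (τ : ℝ) (a : ℕ → ℝ) (c : ℝ) (m : ℕ) (t : ℝ) :
    queuePos τ (fun i => a i + c) m (t + c) = queuePos τ a m t := by
  simp only [queuePos, departure_add_const, add_lt_add_iff_right]

theorem queuePos_delay_le_general (τ : ℝ) (a : ℕ → ℝ)
    (Δ : ℝ) (m : ℕ) (t : ℝ) :
    queuePos τ (fun i => a i + Δ) m (t + Δ) ≤ queuePos τ a m t :=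
  (queuePos_add_const τ a Δ m t).le

/-- If every arrival is delayed by Δ ≥ 0, then the position of the m-th job in the
delayed queue at time t + Δ is at most its position in the original queue at time t,
for all t after job m's arrival. -/
theorem queuePos_delay_le (τ : ℝ) (hτ : 0 < τ) (a : ℕ → ℝ) (ha : Monotone a)
    (Δ : ℝ) (hΔ : 0 ≤ Δ) (m : ℕ) (t : ℝ) (ht : a m ≤ t) :
    queuePos τ (fun i => a i + Δ) m (t + Δ) ≤ queuePos τ a m t :=
  queuePos_delay_le_general τ a Δ m t
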